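/- arXiv:1412.3676 — 3 statements merged into one kernel-verified Lean document; each statement's English description precedes it below -/
import Mathlib

section
/- Let ρ1 and ρ2 be density matrices (positive semidefinite with trace 1) of the same finite size. Then: (a) if supp ρ1 = supp ρ2, then D_f^min(ρ1‖ρ2) < +∞; (b) if supp ρ1 ⊄ supp ρ2 and supp ρ2 ⊄ supp ρ1, then D_f^min(ρ1‖ρ2) < +∞ if and only if f* is bounded from below on dom f* and dom f* is bounded from above; (c) if supp ρ1 is properly contained in supp ρ2, then D_f^min(ρ1‖ρ2) < +∞ if and only if f* is bounded from below on dom f*; (d) if supp ρ2 is properly contained in supp ρ1, then D_f^min(ρ1‖ρ2) < +∞ if and only if dom f* is bounded from above. Here supp ρ denotes the range (column space) of ρ. -/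
open Filter Matrix
open scoped ComplexOrder
open scoped BigOperators

noncomputable section

attribute [local instance] Classical.propDecidable

/-- The effective domain of an extended-real-valued function. -/
def edom (f : ℝ → EReal) : Set ℝ := {x | f x < ⊤}

/-- The convex conjugate `f*`(t) = sup_λ (t·λ − f(λ)). -/
def econj (f : ℝ → EReal) (t : ℝ) : EReal := ⨆ l : ℝ, ((t * l : ℝ) : EReal) - f l

/-- The function `g` associated to `f`, i.e. the lsc positively homogeneous
extension of `(λ1,λ2) ↦ λ2 f(λ1/λ2)`. -/
def gfun (f : ℝ → EReal) (l1 l2 : ℝ) : EReal :=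
  if l1 = 0 ∧ l2 = 0 then 0
  else if l1 ∈ edom f ∧ 0 < l2 then ((l2 : ℝ) : EReal) * f (l1 / l2)
  else if l1 ∈ edom f ∧ l2 = 0 then
    limUnder (nhdsWithin 0 (Set.Ioi 0)) fun u : ℝ => ((u : ℝ) : EReal) * f (l1 / u)
  else ⊤

/-- A finite-outcome POVM. -/
def IsPOVM {n m : ℕ} (M : Fin m → Matrix (Fin n) (Fin n) ℂ) : Prop :=
  (∀ x, (M x).PosSemidef) ∧ ∑ x, M x = 1

/-- The maximized measured f-divergence `D_f^min`. -/
def Dfmin (f : ℝ → EReal) {n : ℕ} (ρ1 ρ2 : Matrix (Fin n) (Fin n) ℂ) : EReal :=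
  ⨆ (m : ℕ) (M : Fin m → Matrix (Fin n) (Fin n) ℂ) (_ : IsPOVM M),
    ∑ x, gfun f ((ρ1 * M x).trace.re) ((ρ2 * M x).trace.re)

/-- Functional calculus on a Hermitian matrix: apply `h` to the eigenvalues. -/
def hermFC {k : ℕ} (h : ℝ → ℝ) {A : Matrix (Fin k) (Fin k) ℂ} (hA : A.IsHermitian) :
    Matrix (Fin k) (Fin k) ℂ :=
  (hA.eigenvectorUnitary : Matrix (Fin k) (Fin k) ℂ) *
    Matrix.diagonal (fun i => (h (hA.eigenvalues i) : ℂ)) *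
    (star (hA.eigenvectorUnitary : Matrix (Fin k) (Fin k) ℂ))

/-- The spectrum of the Hermitian matrix `A` is contained in `S`. -/
def specIn {k : ℕ} {A : Matrix (Fin k) (Fin k) ℂ} (hA : A.IsHermitian) (S : Set ℝ) : Prop :=
  ∀ i, hA.eigenvalues i ∈ S

/-- The Loewner order: `A ≤ B`. -/
def Loewner {k : ℕ} (A B : Matrix (Fin k) (Fin k) ℂ) : Prop := (B - A).PosSemidef

/-- Operator convexity of a real function on a set `S` (midpoint form, via
the functional calculus on Hermitian matrices with spectrum in `S`). -/
def OpConvexOn (h : ℝ → ℝ) (S : Set ℝ) : Prop :=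
  ∀ (k : ℕ), 1 ≤ k → ∀ (A B : Matrix (Fin k) (Fin k) ℂ)
    (hA : A.IsHermitian) (hB : B.IsHermitian) (hM : ((1/2 : ℂ) • (A + B)).IsHermitian),
    specIn hA S → specIn hB S →
    Loewner (hermFC h hM) ((1/2 : ℂ) • (hermFC h hA + hermFC h hB))

/-- The real-valued version of the convex conjugate of `f` (used for the
functional calculus; on `dom f*` it agrees with `f*` when `f` is proper). -/
def econjR (f : ℝ → EReal) (t : ℝ) : ℝ := (econj f t).toReal

/-- Condition (I): `f*` is operator convex on its effective domain. -/
def CondI (f : ℝ → EReal) : Prop := OpConvexOn (econjR f) (edom (econj f))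

/-- `f` is a proper lower semicontinuous convex function with `dom f ⊇ (0,∞)`. -/
structure NiceF (f : ℝ → EReal) : Prop where
  ne_bot : ∀ x, f x ≠ ⊥
  ne_top : ∃ x, f x ≠ ⊤
  lsc : LowerSemicontinuous f
  convex : ∀ x y a b : ℝ, 0 ≤ a → 0 ≤ b → a + b = 1 →
    f (a * x + b * y) ≤ ((a : ℝ) : EReal) * f x + ((b : ℝ) : EReal) * f y
  dom : Set.Ioi (0 : ℝ) ⊆ edom f

/-- The support of a matrix: its range (column space). -/
def suppM {n : ℕ} (ρ : Matrix (Fin n) (Fin n) ℂ) : Submodule ℂ (Fin n → ℂ) :=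
  LinearMap.range ρ.mulVecLin

/-- A density matrix: positive semidefinite with trace one. -/
def IsDensity {n : ℕ} (ρ : Matrix (Fin n) (Fin n) ℂ) : Prop :=
  ρ.PosSemidef ∧ ρ.trace = 1

/-- `f*` is bounded from below on its effective domain. -/
def ConjBddBelow (f : ℝ → EReal) : Prop :=
  ∃ c : ℝ, ∀ t ∈ edom (econj f), ((c : ℝ) : EReal) ≤ econj f t

/-- The effective domain of `f*` is bounded from above. -/
def ConjDomBddAbove (f : ℝ → EReal) : Prop :=
  ∃ a : ℝ, ∀ t ∈ edom (econj f), t ≤ a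

/-!
For a POVM element `M` write `p = tr(ρ1 M)` and `q = tr(ρ2 M)`. The summand `g(p, q)` can only
blow up at `q = 0 < p`, where `g(p, 0) = p · lim_{s → ∞} f(s)/s` is finite iff `f` grows at most
linearly, or at `p = 0 < q`, where `g(0, q) = q f(0)`. The two-outcome POVM formed by the projection
onto `ker ρ2` and its complement realises the first situation exactly when `supp ρ1 ⊄ supp ρ2`;
symmetrically for the second. Conversely `supp ρ1 ⊆ supp ρ2` gives `ρ1 ≤ c ρ2`, hence `p ≤ c q` for
every `M`, and convexity of `f` then bounds `g(p, q)` by `A q + B p`, whose sum over a POVM is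
`A + B`. Finally `f(0) < ∞` iff `f*` is bounded below on its domain (by lower semicontinuity of
`f`), and `f` grows at most linearly iff `dom f*` is bounded above.
-/

open Topology

theorem ConvexOn.add_slope_mul_le {D : Set ℝ} {φ : ℝ → ℝ} (hφ : ConvexOn ℝ D φ) {x y l : ℝ}
    (hx : x ∈ D) (hy : y ∈ D) (hl : l ∈ D) (hxy : x < y) (hxl : l ≤ x ∨ y ≤ l) :
    φ x + slope φ x y * (l - x) ≤ φ l := by
  rcases eq_or_ne l x with rfl | hlx
  · simp
  have hmono := hφ.slope_mono hx
  have hy' : y ∈ D \ {x} := ⟨hy, hxy.ne'⟩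
  have hl' : l ∈ D \ {x} := ⟨hl, hlx⟩
  rcases hxl with hlx' | hyl
  · have hlt : l - x < 0 := by have := lt_of_le_of_ne hlx' hlx; linarith
    have h := hmono hl' hy' (by linarith)
    rw [slope_def_field φ x l, div_le_iff_of_neg hlt] at h
    linarith
  · have hlt : 0 < l - x := by linarith
    have h := hmono hy' hl' hyl
    rw [slope_def_field φ x l, le_div_iff₀ hlt] at h
    linarith

lemma tendsto_div_nhdsGT_zero {p : ℝ} (hp : 0 < p) :
    Tendsto (fun u : ℝ => p / u) (𝓝[>] 0) atTop := by
  simpa only [div_eq_mul_inv] using tendsto_inv_nhdsGT_zero.const_mul_atTop hp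

lemma EReal.coe_finset_sum {α : Type*} (s : Finset α) (g : α → ℝ) :
    ((∑ x ∈ s, g x : ℝ) : EReal) = ∑ x ∈ s, (g x : EReal) :=
  map_sum (⟨⟨Real.toEReal, EReal.coe_zero⟩, EReal.coe_add⟩ : ℝ →+ EReal) g s

lemma eq_top_of_not_mem_edom {f : ℝ → EReal} {x : ℝ} (hx : x ∉ edom f) : f x = ⊤ :=
  not_lt_top_iff.mp hx

lemma sub_le_econj {f : ℝ → EReal} (t l : ℝ) : ((t * l : ℝ) : EReal) - f l ≤ econj f t :=
  le_iSup (fun l => ((t * l : ℝ) : EReal) - f l) l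

lemma gfun_zero_zero {f : ℝ → EReal} : gfun f 0 0 = 0 := if_pos ⟨rfl, rfl⟩

lemma gfun_zero_of_pos {f : ℝ → EReal} {q : ℝ} (hq : 0 < q) :
    gfun f 0 q = (q : EReal) * f 0 := by
  rw [gfun, if_neg fun h => hq.ne' h.2]
  by_cases h0 : 0 ∈ edom f
  · rw [if_pos ⟨h0, hq⟩, zero_div]
  · rw [if_neg fun h => h0 h.1, if_neg fun h => h0 h.1, eq_top_of_not_mem_edom h0,
      EReal.coe_mul_top_of_pos hq]

def HasLinearGrowth (f : ℝ → EReal) : Prop :=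
  ∃ K : ℝ, ∀ s, 1 ≤ s → (f s).toReal ≤ (f 1).toReal + K * (s - 1)

lemma exists_lt_slope_of_not_hasLinearGrowth {f : ℝ → EReal} (hL : ¬ HasLinearGrowth f)
    (K : ℝ) : ∃ s, 1 < s ∧ K < slope (EReal.toReal ∘ f) 1 s := by
  simp only [HasLinearGrowth, not_exists, not_forall, not_le] at hL
  obtain ⟨s, hs1, hs⟩ := hL K
  have hs1 : 1 < s := lt_of_le_of_ne hs1 (by rintro rfl; simp at hs)
  refine ⟨s, hs1, ?_⟩
  rw [slope_def_field, lt_div_iff₀ (sub_pos.2 hs1)]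
  simp only [Function.comp_apply]
  linarith

namespace NiceF

variable {f : ℝ → EReal}

lemma coe_toReal (hf : NiceF f) {x : ℝ} (hx : x ∈ edom f) : (((f x).toReal : ℝ) : EReal) = f x :=
  EReal.coe_toReal hx.ne (hf.ne_bot x)

lemma mem_edom_of_pos (hf : NiceF f) {x : ℝ} (hx : 0 < x) : x ∈ edom f := hf.dom hx

lemma convex_edom (hf : NiceF f) : Convex ℝ (edom f) := by
  intro x hx y hy a b ha hb hab
  have h := hf.convex x y a b ha hb hab
  rw [← hf.coe_toReal hx, ← hf.coe_toReal hy] at h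
  exact h.trans_lt (by exact_mod_cast EReal.coe_lt_top _)

lemma convexOn_toReal (hf : NiceF f) : ConvexOn ℝ (edom f) (EReal.toReal ∘ f) := by
  refine ⟨hf.convex_edom, fun x hx y hy a b ha hb hab => ?_⟩
  have h := hf.convex x y a b ha hb hab
  have hxy : a * x + b * y ∈ edom f := hf.convex_edom hx hy ha hb hab
  rw [← hf.coe_toReal hx, ← hf.coe_toReal hy, ← hf.coe_toReal hxy] at h
  simp only [Function.comp_apply, smul_eq_mul]
  exact_mod_cast h

lemma not_mem_edom_of_nonpos (hf : NiceF f) (h0 : 0 ∉ edom f) {z : ℝ} (hz : z ≤ 0) :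
    z ∉ edom f := fun hz' =>
  h0 (hf.convex_edom.ordConnected.out hz' (hf.mem_edom_of_pos one_pos) ⟨hz, zero_le_one⟩)

lemma econj_le (hf : NiceF f) {t C : ℝ} (h : ∀ l ∈ edom f, t * l - (f l).toReal ≤ C) :
    econj f t ≤ C := by
  refine iSup_le fun l => ?_
  by_cases hl : l ∈ edom f
  · rw [← hf.coe_toReal hl, ← EReal.coe_sub]
    exact_mod_cast h l hl
  · rw [eq_top_of_not_mem_edom hl]
    simp

lemma exists_econj_le_of_not_mem_edom (hf : NiceF f) (h0 : 0 ∉ edom f) (c : ℝ) :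
    ∃ t, econj f t ≤ c := by
  -- Lower semicontinuity gives `f > -c` on `(0, q)`, and a secant bounds `f` below on `[q, ∞)`;
  -- a sufficiently negative `t` then makes `t l - f l ≤ c` everywhere.
  obtain ⟨δ, hδ, hnear⟩ := Metric.eventually_nhds_iff.mp (hf.lsc 0 ((-c : ℝ) : EReal)
    (show ((-c : ℝ) : EReal) < f 0 by
      rw [eq_top_of_not_mem_edom h0]; exact EReal.coe_lt_top _))
  set φ := EReal.toReal ∘ f
  set q := δ / 2
  set p := q / 2
  have hp : 0 < p := by positivity
  have hpq : p < q := by simp only [p, q]; linarith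
  set m := slope φ p q with hm_def
  have hm : φ q = φ p + m * (q - p) := by
    rw [hm_def, slope_def_field, div_mul_cancel₀ _ (sub_ne_zero.2 hpq.ne')]; ring
  set t := min (min m 0) ((φ q + c) / q)
  have htm : t ≤ m := (min_le_left _ _).trans (min_le_left _ _)
  have ht0 : t ≤ 0 := (min_le_left _ _).trans (min_le_right _ _)
  have htq : t * q ≤ φ q + c := (le_div_iff₀ (hp.trans hpq)).mp (min_le_right _ _)
  refine ⟨t, hf.econj_le fun l hl => ?_⟩
  have hl0 : 0 < l := not_le.mp fun h => hf.not_mem_edom_of_nonpos h0 h hl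
  rcases lt_or_ge l q with hlq | hlq
  · have hfl : ((-c : ℝ) : EReal) < f l := hnear (show dist l 0 < δ by
      rw [Real.dist_eq, sub_zero, abs_of_pos hl0]; simp only [q] at hlq; linarith)
    rw [← hf.coe_toReal hl] at hfl
    have : -c < (f l).toReal := by exact_mod_cast hfl
    nlinarith
  · have hsec := hf.convexOn_toReal.add_slope_mul_le (hf.mem_edom_of_pos hp)
      (hf.mem_edom_of_pos (hp.trans hpq)) hl hpq (Or.inr hlq)
    change φ p + m * (l - p) ≤ φ l at hsec
    change t * l - φ l ≤ c
    nlinarith [mul_le_mul_of_nonneg_right htm (sub_nonneg.2 hlq)]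

theorem conjBddBelow_iff (hf : NiceF f) : ConjBddBelow f ↔ 0 ∈ edom f := by
  refine ⟨fun ⟨c, hc⟩ => ?_, fun h0 => ⟨-(f 0).toReal, fun t _ => ?_⟩⟩
  · by_contra h0
    obtain ⟨t, ht⟩ := hf.exists_econj_le_of_not_mem_edom h0 (c - 1)
    have := (hc t (ht.trans_lt (EReal.coe_lt_top _))).trans ht
    norm_cast at this
    linarith
  · have h := sub_le_econj (f := f) t 0
    rwa [← hf.coe_toReal h0, ← EReal.coe_sub, mul_zero, zero_sub] at h

lemma conjDomBddAbove_of_hasLinearGrowth (hf : NiceF f) (hK : HasLinearGrowth f) :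
    ConjDomBddAbove f := by
  obtain ⟨K, hK⟩ := hK
  refine ⟨K, fun t ht => le_of_not_gt fun hKt => ?_⟩
  set r := (econj f t).toReal
  have hr : econj f t ≤ r := EReal.le_coe_toReal ht.ne
  set s := max 1 ((r - K + (f 1).toReal + 1) / (t - K))
  have hs : (r - K + (f 1).toReal + 1) / (t - K) ≤ s := le_max_right _ _
  rw [div_le_iff₀ (sub_pos.2 hKt)] at hs
  have h := (sub_le_econj t s).trans hr
  rw [← hf.coe_toReal (hf.mem_edom_of_pos (by positivity)), ← EReal.coe_sub] at h
  have := hK s (le_max_left _ _)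
  norm_cast at h
  nlinarith

lemma hasLinearGrowth_of_conjDomBddAbove (hf : NiceF f) (ha : ConjDomBddAbove f) :
    HasLinearGrowth f := by
  obtain ⟨a, ha⟩ := ha
  by_contra hL
  -- The secant slope `m` over `[1, s]` exceeds `a` but lies in `dom f*`.
  obtain ⟨s, hs1, ham⟩ := exists_lt_slope_of_not_hasLinearGrowth hL a
  set φ := EReal.toReal ∘ f
  have hmem : ∀ {x : ℝ}, 0 < x → x ∈ edom f := hf.mem_edom_of_pos
  set m := slope φ 1 s with hm_def
  set m' := slope φ (1 / 2) 1 with hm'_def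
  have hm'm : m' ≤ m := by
    simpa only [hm_def, hm'_def, slope_def_field] using
      hf.convexOn_toReal.slope_mono_adjacent (hmem (by norm_num : (0 : ℝ) < 1 / 2))
        (hmem (by linarith)) (by norm_num) hs1
  have hm' : φ 1 = φ (1 / 2) + m' * (1 - 1 / 2) := by
    rw [hm'_def, slope_def_field, div_mul_cancel₀ _ (by norm_num)]; ring
  have hle : econj f m ≤ ((m - φ 1 + (m - m') * (s - 1) : ℝ) : EReal) := by
    refine hf.econj_le fun l hl => ?_
    change m * l - φ l ≤ _
    rcases le_or_gt l 1 with hl1 | hl1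
    · have := hf.convexOn_toReal.add_slope_mul_le (hmem one_pos) (hmem (by linarith)) hl hs1
        (Or.inl hl1)
      nlinarith [mul_nonneg (sub_nonneg.2 hm'm) (sub_nonneg.2 hs1.le)]
    rcases le_or_gt s l with hsl | hls
    · have := hf.convexOn_toReal.add_slope_mul_le (hmem one_pos) (hmem (by linarith)) hl hs1
        (Or.inr hsl)
      nlinarith [mul_nonneg (sub_nonneg.2 hm'm) (sub_nonneg.2 hs1.le)]
    · have := hf.convexOn_toReal.add_slope_mul_le (x := 1 / 2) (hmem (by norm_num))
        (hmem one_pos) hl (by norm_num) (Or.inr hl1.le)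
      nlinarith [mul_le_mul_of_nonneg_left hls.le (sub_nonneg.2 hm'm)]
  exact (ha m (hle.trans_lt (EReal.coe_lt_top _))).not_gt ham

theorem conjDomBddAbove_iff (hf : NiceF f) : ConjDomBddAbove f ↔ HasLinearGrowth f :=
  ⟨hf.hasLinearGrowth_of_conjDomBddAbove, hf.conjDomBddAbove_of_hasLinearGrowth⟩

lemma monotoneOn_slope_one (hf : NiceF f) :
    MonotoneOn (slope (EReal.toReal ∘ f) 1) (Set.Ioi 1) :=
  (hf.convexOn_toReal.slope_mono (hf.mem_edom_of_pos one_pos)).mono fun s hs =>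
    ⟨hf.mem_edom_of_pos (one_pos.trans hs), (ne_of_gt hs : s ≠ 1)⟩

lemma perspective_eventuallyEq (hf : NiceF f) {p : ℝ} (hp : 0 < p) :
    (fun u : ℝ => (u : EReal) * f (p / u)) =ᶠ[𝓝[>] 0] fun u =>
      ((u * (f 1).toReal + (p - u) * slope (EReal.toReal ∘ f) 1 (p / u) : ℝ) : EReal) := by
  filter_upwards [Ioo_mem_nhdsGT hp] with u ⟨hu, hup⟩
  rw [← hf.coe_toReal (hf.mem_edom_of_pos (div_pos hp hu)), ← EReal.coe_mul, slope_def_field]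
  congr 1
  have : p / u - 1 = (p - u) / u := by field_simp
  rw [this, Function.comp_apply, Function.comp_apply]
  field_simp [(sub_pos.2 hup).ne']
  ring

lemma exists_tendsto_perspective (hf : NiceF f) {K : ℝ}
    (hK : ∀ s, 1 ≤ s → (f s).toReal ≤ (f 1).toReal + K * (s - 1)) {p : ℝ} (hp : 0 < p) :
    ∃ L ≤ K,
      Tendsto (fun u : ℝ => (u : EReal) * f (p / u)) (𝓝[>] 0) (𝓝 ((p * L : ℝ) : EReal)) := by
  set σ := slope (EReal.toReal ∘ f) 1 with hσ_def
  have hσK : ∀ s, 1 < s → σ s ≤ K := fun s hs => by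
    rw [hσ_def, slope_def_field, div_le_iff₀ (sub_pos.2 hs)]
    have := hK s hs.le
    simp only [Function.comp_apply]
    linarith
  -- `σ` is monotone on `(1, ∞)`, so after clamping the argument it converges to its supremum.
  set τ := fun s => σ (max s 2)
  have hτ : Monotone τ := fun s t hst =>
    hf.monotoneOn_slope_one (show (1 : ℝ) < max s 2 by simp) (show (1 : ℝ) < max t 2 by simp)
      (max_le_max_right 2 hst)
  have hτK : ∀ s, τ s ≤ K := fun s => hσK _ (by simp)
  refine ⟨⨆ s, τ s, ciSup_le hτK, ?_⟩
  have hlim := (tendsto_atTop_ciSup hτ ⟨K, by rintro _ ⟨s, rfl⟩; exact hτK s⟩).comp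
    (tendsto_div_nhdsGT_zero hp)
  have hlin : Tendsto (fun u : ℝ => u * (f 1).toReal + (p - u) * τ (p / u)) (𝓝[>] 0)
      (𝓝 (0 * (f 1).toReal + (p - 0) * ⨆ s, τ s)) :=
    ((tendsto_id.mono_left nhdsWithin_le_nhds).mul_const _).add
      (((tendsto_const_nhds.sub tendsto_id).mono_left nhdsWithin_le_nhds).mul hlim)
  rw [zero_mul, zero_add, sub_zero] at hlin
  refine (EReal.tendsto_coe.mpr hlin).congr' ((hf.perspective_eventuallyEq hp).trans ?_).symm
  filter_upwards [Ioo_mem_nhdsGT (half_pos hp)] with u ⟨hu, hup⟩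
  have : 2 ≤ p / u := by rw [le_div_iff₀ hu]; linarith
  simp only [τ, max_eq_left this, hσ_def]

lemma tendsto_perspective_top (hf : NiceF f) (hL : ¬ HasLinearGrowth f) {p : ℝ} (hp : 0 < p) :
    Tendsto (fun u : ℝ => (u : EReal) * f (p / u)) (𝓝[>] 0) (𝓝 ⊤) := by
  set σ := slope (EReal.toReal ∘ f) 1 with hσ_def
  have hσ : Tendsto σ atTop atTop := by
    refine tendsto_atTop_atTop.2 fun K => ?_
    obtain ⟨s, hs1, hs⟩ := exists_lt_slope_of_not_hasLinearGrowth hL K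
    exact ⟨s, fun t hst => hs.le.trans (hf.monotoneOn_slope_one hs1 (hs1.trans_le hst) hst)⟩
  have hlin : Tendsto (fun u : ℝ => (p - u) * σ (p / u) + u * (f 1).toReal) (𝓝[>] 0) atTop := by
    have h := ((tendsto_const_nhds.sub tendsto_id).mono_left nhdsWithin_le_nhds).pos_mul_atTop
      (by simpa using hp) (hσ.comp (tendsto_div_nhdsGT_zero hp))
    refine h.atTop_add (((tendsto_id.mono_left nhdsWithin_le_nhds).mul_const _))
  refine (EReal.tendsto_coe_atTop.comp hlin).congr'
    ((hf.perspective_eventuallyEq hp).trans ?_).symm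
  filter_upwards with u
  simp only [Function.comp_apply, hσ_def, add_comm]

lemma gfun_of_pos_of_pos (hf : NiceF f) {p q : ℝ} (hp : 0 < p) (hq : 0 < q) :
    gfun f p q = ((q * (f (p / q)).toReal : ℝ) : EReal) := by
  rw [gfun, if_neg fun h => hp.ne' h.1, if_pos ⟨hf.mem_edom_of_pos hp, hq⟩, EReal.coe_mul,
    hf.coe_toReal (hf.mem_edom_of_pos (div_pos hp hq))]

lemma gfun_of_pos_zero (hf : NiceF f) {p : ℝ} (hp : 0 < p) :
    gfun f p 0 = limUnder (𝓝[>] 0) fun u : ℝ => (u : EReal) * f (p / u) := by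
  rw [gfun, if_neg fun h => hp.ne' h.1, if_neg fun h => lt_irrefl 0 h.2,
    if_pos ⟨hf.mem_edom_of_pos hp, rfl⟩]

lemma exists_gfun_of_pos_zero_eq (hf : NiceF f) {K : ℝ}
    (hK : ∀ s, 1 ≤ s → (f s).toReal ≤ (f 1).toReal + K * (s - 1)) {p : ℝ} (hp : 0 < p) :
    ∃ L ≤ K, gfun f p 0 = ((p * L : ℝ) : EReal) := by
  obtain ⟨L, hLK, hL⟩ := hf.exists_tendsto_perspective hK hp
  exact ⟨L, hLK, by rw [hf.gfun_of_pos_zero hp, hL.limUnder_eq]⟩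

lemma gfun_of_pos_zero_eq_top (hf : NiceF f) (hL : ¬ HasLinearGrowth f) {p : ℝ} (hp : 0 < p) :
    gfun f p 0 = ⊤ := by
  rw [hf.gfun_of_pos_zero hp, (hf.tendsto_perspective_top hL hp).limUnder_eq]

lemma gfun_ne_bot (hf : NiceF f) {p q : ℝ} (hp : 0 ≤ p) (hq : 0 ≤ q) : gfun f p q ≠ ⊥ := by
  rcases hp.eq_or_lt with rfl | hp <;> rcases hq.eq_or_lt with rfl | hq
  · simp [gfun_zero_zero]
  · rw [gfun_zero_of_pos hq]
    by_cases h0 : 0 ∈ edom f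
    · rw [← hf.coe_toReal h0, ← EReal.coe_mul]; exact EReal.coe_ne_bot _
    · rw [eq_top_of_not_mem_edom h0, EReal.coe_mul_top_of_pos hq]; simp
  · by_cases hL : HasLinearGrowth f
    · obtain ⟨K, hK⟩ := hL
      obtain ⟨L, -, hL⟩ := hf.exists_gfun_of_pos_zero_eq hK hp
      rw [hL]; exact EReal.coe_ne_bot _
    · rw [hf.gfun_of_pos_zero_eq_top hL hp]; simp
  · rw [hf.gfun_of_pos_of_pos hp hq]; exact EReal.coe_ne_bot _

lemma gfun_le_affine (hf : NiceF f) {A B p q : ℝ} (hp : 0 ≤ p) (hq : 0 ≤ q)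
    (hpos : 0 < p → 0 < q → (f (p / q)).toReal ≤ A + B * (p / q))
    (hzero : p = 0 → 0 < q → f 0 ≤ A)
    (hinf : 0 < p → q = 0 → ∀ s, 1 ≤ s → (f s).toReal ≤ (f 1).toReal + B * (s - 1)) :
    gfun f p q ≤ ((A * q + B * p : ℝ) : EReal) := by
  rcases hp.eq_or_lt with rfl | hp <;> rcases hq.eq_or_lt with rfl | hq
  · simp [gfun_zero_zero]
  · rw [gfun_zero_of_pos hq, mul_zero, add_zero, EReal.coe_mul, mul_comm]
    exact mul_le_mul_of_nonneg_right (hzero rfl hq) (EReal.coe_nonneg.mpr hq.le)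
  · obtain ⟨L, hLB, hL⟩ := hf.exists_gfun_of_pos_zero_eq (hinf hp rfl) hp
    rw [hL, mul_zero, zero_add, mul_comm B]
    exact_mod_cast mul_le_mul_of_nonneg_left hLB hp.le
  · rw [hf.gfun_of_pos_of_pos hp hq]
    have h := mul_le_mul_of_nonneg_left (hpos hp hq) hq.le
    have e : q * (A + B * (p / q)) = A * q + B * p := by field_simp
    exact_mod_cast h.trans_eq e

lemma gfun_le_of_ratio_mem_Icc (hf : NiceF f) {lo hi p q : ℝ} (hlo : lo ∈ edom f)
    (hlo0 : 0 ≤ lo) (hhi : 0 < hi) (hp : 0 ≤ p) (hq : 0 ≤ q) (hlop : lo * q ≤ p)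
    (hphi : p ≤ hi * q) :
    gfun f p q ≤ ((max (f lo).toReal (f hi).toReal * q : ℝ) : EReal) := by
  have h := hf.gfun_le_affine (A := max (f lo).toReal (f hi).toReal) (B := 0) hp hq
    (fun hp hq => by
      rw [zero_mul, add_zero]
      exact hf.convexOn_toReal.le_max_of_mem_Icc hlo (hf.mem_edom_of_pos hhi)
        ⟨(le_div_iff₀ hq).2 hlop, (div_le_iff₀ hq).2 hphi⟩)
    (fun hp0 hq => by
      obtain rfl : lo = 0 := le_antisymm (by nlinarith) hlo0
      rw [← hf.coe_toReal hlo, EReal.coe_le_coe_iff]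
      exact le_max_left _ _)
    (fun hp hq0 => absurd (hq0 ▸ hphi) (by simpa using hp))
  simpa using h

lemma gfun_le_of_linear_growth (hf : NiceF f) {K lo p q : ℝ}
    (hK : ∀ s, 1 ≤ s → (f s).toReal ≤ (f 1).toReal + K * (s - 1)) (hlo : lo ∈ edom f)
    (hlo0 : 0 ≤ lo) (hlo1 : lo ≤ 1) (hp : 0 ≤ p) (hq : 0 ≤ q) (hlop : lo * q ≤ p) :
    gfun f p q ≤
      (((max (f lo).toReal (f 1).toReal + |K|) * q + max K 0 * p : ℝ) : EReal) := by
  set A := max (f lo).toReal (f 1).toReal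
  refine hf.gfun_le_affine hp hq (fun hp hq => ?_) (fun hp0 hq => ?_) (fun _ _ s hs => ?_)
  · have hx : 0 ≤ p / q := by positivity
    have hK0 : 0 ≤ max K 0 * (p / q) := mul_nonneg (le_max_right _ _) hx
    rcases le_total (p / q) 1 with hx1 | hx1
    · have := hf.convexOn_toReal.le_max_of_mem_Icc hlo (hf.mem_edom_of_pos one_pos)
        ⟨(le_div_iff₀ hq).2 hlop, hx1⟩
      simp only [Function.comp_apply] at this
      linarith [abs_nonneg K]
    · have := hK _ hx1
      nlinarith [neg_abs_le K, le_max_left K 0, le_max_right (f lo).toReal (f 1).toReal]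
  · obtain rfl : lo = 0 := le_antisymm (by nlinarith) hlo0
    rw [← hf.coe_toReal hlo, EReal.coe_le_coe_iff]
    linarith [le_max_left (f 0).toReal (f 1).toReal, abs_nonneg K]
  · nlinarith [hK s hs, le_max_left K 0]

end NiceF

namespace Matrix

open scoped MatrixOrder

variable {𝕜 ι : Type*} [RCLike 𝕜] [Fintype ι] [DecidableEq ι]

lemma continuousOn_spectrum (g : ℝ → ℝ) (A : Matrix ι ι 𝕜) : ContinuousOn g (spectrum ℝ A) :=
  A.finite_real_spectrum.continuousOn g

lemma trace_mul_nonneg {A B : Matrix ι ι 𝕜} (hA : 0 ≤ A) (hB : 0 ≤ B) : 0 ≤ (A * B).trace := by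
  rw [← CFC.sqrt_mul_sqrt_self B hB, ← Matrix.mul_assoc, trace_mul_cycle]
  exact (nonneg_iff_posSemidef.mp
    ((IsSelfAdjoint.of_nonneg (CFC.sqrt_nonneg B)).conjugate_nonneg hA)).trace_nonneg

lemma mul_eq_zero_of_trace_mul_eq_zero {A Q : Matrix ι ι 𝕜} (hA : 0 ≤ A) (hQ : IsSelfAdjoint Q)
    (hQQ : Q * Q = Q) (h : (A * Q).trace = 0) : Q * A = 0 := by
  have hX : IsSelfAdjoint (CFC.sqrt A) := IsSelfAdjoint.of_nonneg (CFC.sqrt_nonneg A)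
  have hXQ : CFC.sqrt A * Q = 0 := by
    rw [← trace_conjTranspose_mul_self_eq_zero_iff, conjTranspose_mul, ← star_eq_conjTranspose,
      ← star_eq_conjTranspose, hX.star_eq, hQ.star_eq, ← h, Matrix.mul_assoc,
      ← Matrix.mul_assoc _ _ Q, CFC.sqrt_mul_sqrt_self A hA, trace_mul_comm, Matrix.mul_assoc, hQQ]
  have hAQ : A * Q = 0 := by
    rw [← CFC.sqrt_mul_sqrt_self A hA, Matrix.mul_assoc, hXQ, Matrix.mul_zero]
  simpa [hQ.star_eq, (IsSelfAdjoint.of_nonneg hA).star_eq] using congrArg star hAQ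

lemma exists_le_smul_one {A : Matrix ι ι 𝕜} (hA : A.IsHermitian) :
    ∃ C : ℝ, 0 < C ∧ A ≤ C • 1 := by
  obtain ⟨C, hC⟩ := A.finite_real_spectrum.bddAbove
  refine ⟨max C 1, by positivity, ?_⟩
  rw [← Algebra.algebraMap_eq_smul_one]
  conv_lhs => rw [← cfc_id' ℝ A hA.isSelfAdjoint]
  exact cfc_le_algebraMap _ _ _ fun t ht => (hC ht).trans (le_max_left _ _)

lemma re_trace_mul_nonneg {A N : Matrix ι ι ℂ} (hA : 0 ≤ A) (hN : 0 ≤ N) :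
    0 ≤ (A * N).trace.re :=
  (Complex.nonneg_iff.mp (trace_mul_nonneg hA hN)).1

lemma re_trace_mul_le_of_le_smul {A B N : Matrix ι ι ℂ} {c : ℝ} (hAB : A ≤ c • B) (hN : 0 ≤ N) :
    (A * N).trace.re ≤ c * (B * N).trace.re := by
  have := re_trace_mul_nonneg (sub_nonneg.mpr hAB) hN
  rwa [Matrix.sub_mul, trace_sub, Complex.sub_re, sub_nonneg, Matrix.smul_mul, trace_smul,
    Complex.real_smul, Complex.re_ofReal_mul] at this

/-- The orthogonal projection onto the kernel of a Hermitian matrix. -/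
noncomputable def kerProj (A : Matrix ι ι 𝕜) : Matrix ι ι 𝕜 :=
  cfc (fun t : ℝ => if t = 0 then 1 else 0) A

variable {A : Matrix ι ι 𝕜}

lemma kerProj_nonneg : 0 ≤ kerProj A :=
  cfc_nonneg fun t _ => by split_ifs <;> norm_num

lemma kerProj_le_one : kerProj A ≤ 1 :=
  cfc_le_one _ _ fun t _ => by split_ifs <;> norm_num

lemma isSelfAdjoint_kerProj : IsSelfAdjoint (kerProj A) := cfc_predicate _ _

lemma kerProj_mul_self : kerProj A * kerProj A = kerProj A := by
  rw [kerProj, ← cfc_mul _ _ _ (continuousOn_spectrum _ A) (continuousOn_spectrum _ A)]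
  congr 1
  ext t
  split_ifs <;> norm_num

lemma mul_kerProj (hA : A.IsHermitian) : A * kerProj A = 0 := by
  nth_rw 1 [← cfc_id' ℝ A hA.isSelfAdjoint]
  rw [kerProj, ← cfc_mul _ _ _ (continuousOn_spectrum _ A) (continuousOn_spectrum _ A)]
  convert cfc_zero ℝ A using 2
  ext t
  split_ifs with h <;> simp [h]

lemma kerProj_mul (hA : A.IsHermitian) : kerProj A * A = 0 := by
  simpa [isSelfAdjoint_kerProj.star_eq, hA.isSelfAdjoint.star_eq] using
    congrArg star (mul_kerProj hA)

lemma mul_cfc_inv (hA : A.IsHermitian) : A * cfc (·⁻¹ : ℝ → ℝ) A = 1 - kerProj A := by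
  nth_rw 1 [← cfc_id' ℝ A hA.isSelfAdjoint]
  rw [kerProj, ← cfc_mul _ _ _ (continuousOn_spectrum _ A) (continuousOn_spectrum _ A),
    ← cfc_one ℝ A hA.isSelfAdjoint,
    ← cfc_sub _ _ _ (continuousOn_spectrum _ A) (continuousOn_spectrum _ A)]
  congr 1
  ext t
  split_ifs with h <;> simp [h]

lemma one_sub_kerProj_le_smul {ρ : Matrix ι ι 𝕜} (hρ : 0 ≤ ρ) :
    ∃ M : ℝ, 0 < M ∧ 1 - kerProj ρ ≤ M • ρ := by
  obtain ⟨M, hM⟩ := (ρ.finite_real_spectrum.image (·⁻¹)).bddAbove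
  have hρ' := IsSelfAdjoint.of_nonneg hρ
  refine ⟨max M 1, by positivity, ?_⟩
  rw [kerProj, ← cfc_one ℝ ρ hρ', ← cfc_sub _ _ _ (continuousOn_spectrum _ ρ)
    (continuousOn_spectrum _ ρ), ← cfc_const_mul_id (max M 1) ρ hρ']
  refine cfc_mono (hf := continuousOn_spectrum _ ρ) fun t ht => ?_
  split_ifs with h0
  · simp [h0]
  have ht0 : 0 < t := lt_of_le_of_ne (spectrum_nonneg_of_nonneg hρ ht) (Ne.symm h0)
  have := (hM ⟨t, ht, rfl⟩).trans (le_max_left M 1)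
  rw [inv_le_iff_one_le_mul₀ ht0] at this
  simpa [mul_comm] using this

end Matrix

section Support

open scoped MatrixOrder

variable {n : ℕ}

lemma suppM_mul_le (A X : Matrix (Fin n) (Fin n) ℂ) : suppM (A * X) ≤ suppM A := by
  simpa only [suppM, Matrix.mulVecLin_mul] using LinearMap.range_comp_le_range _ _

lemma suppM_le_iff_kerProj_mul_eq_zero {ρ A : Matrix (Fin n) (Fin n) ℂ}
    (hρ : ρ.IsHermitian) : suppM A ≤ suppM ρ ↔ ρ.kerProj * A = 0 := by
  constructor
  · intro h
    have hker : suppM ρ ≤ LinearMap.ker ρ.kerProj.mulVecLin := by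
      rw [suppM, LinearMap.range_le_ker_iff, ← Matrix.mulVecLin_mul, Matrix.kerProj_mul hρ,
        Matrix.mulVecLin_zero]
    have := LinearMap.range_le_ker_iff.mp (h.trans hker)
    rwa [← Matrix.mulVecLin_mul, ← Matrix.mulVecLin_zero, ← Matrix.toLin'_apply',
      ← Matrix.toLin'_apply', Matrix.toLin'.injective.eq_iff] at this
  · intro h
    have : A = ρ * (cfc (·⁻¹ : ℝ → ℝ) ρ * A) := by
      rw [← Matrix.mul_assoc, Matrix.mul_cfc_inv hρ, Matrix.sub_mul, h, Matrix.one_mul, sub_zero]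
    rw [this]
    exact suppM_mul_le _ _

lemma re_trace_mul_kerProj_pos {A ρ : Matrix (Fin n) (Fin n) ℂ} (hA : 0 ≤ A)
    (hρ : ρ.IsHermitian) (h : ¬ suppM A ≤ suppM ρ) : 0 < (A * kerProj ρ).trace.re := by
  refine (Matrix.re_trace_mul_nonneg hA Matrix.kerProj_nonneg).lt_of_ne fun h0 => h ?_
  rw [suppM_le_iff_kerProj_mul_eq_zero hρ]
  refine Matrix.mul_eq_zero_of_trace_mul_eq_zero hA Matrix.isSelfAdjoint_kerProj
    Matrix.kerProj_mul_self ?_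
  have := Complex.nonneg_iff.mp (Matrix.trace_mul_nonneg hA (Matrix.kerProj_nonneg (A := ρ)))
  exact Complex.ext h0.symm this.2.symm

lemma exists_le_smul_of_suppM_le {A ρ : Matrix (Fin n) (Fin n) ℂ} (hA : 0 ≤ A)
    (hρ : 0 ≤ ρ) (h : suppM A ≤ suppM ρ) : ∃ c : ℝ, 0 < c ∧ A ≤ c • ρ := by
  have hρ' := (IsSelfAdjoint.of_nonneg hρ).isHermitian
  have hA' := IsSelfAdjoint.of_nonneg hA
  obtain ⟨C, hC, hAC⟩ := Matrix.exists_le_smul_one hA'.isHermitian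
  obtain ⟨M, hM, hPM⟩ := Matrix.one_sub_kerProj_le_smul hρ
  set P := 1 - ρ.kerProj
  have hP : IsSelfAdjoint P := (IsSelfAdjoint.one _).sub Matrix.isSelfAdjoint_kerProj
  have hQA : ρ.kerProj * A = 0 := (suppM_le_iff_kerProj_mul_eq_zero hρ').mp h
  have hAQ : A * ρ.kerProj = 0 := by
    simpa [hA'.star_eq, Matrix.isSelfAdjoint_kerProj.star_eq] using congrArg star hQA
  -- `A` lives on the support of `ρ`, where `ρ` is bounded below by `M⁻¹`.
  have hPAP : star P * A * P = A := by
    simp only [hP.star_eq, P, Matrix.sub_mul, Matrix.mul_sub, Matrix.one_mul, Matrix.mul_one,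
      hQA, hAQ, sub_zero]
  have hPP : P * P = P := by
    simp only [P, Matrix.sub_mul, Matrix.mul_sub, Matrix.one_mul, Matrix.mul_one,
      Matrix.kerProj_mul_self, sub_self, sub_zero]
  refine ⟨C * M, by positivity, ?_⟩
  calc A = star P * A * P := hPAP.symm
    _ ≤ star P * (C • 1) * P := star_left_conjugate_le_conjugate hAC P
    _ = C • P := by rw [hP.star_eq, Matrix.mul_smul, Matrix.mul_one, Matrix.smul_mul, hPP]
    _ ≤ C • (M • ρ) := smul_le_smul_of_nonneg_left hPM hC.le
    _ = (C * M) • ρ := smul_smul C M ρ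

end Support

section Dfmin

open scoped MatrixOrder

variable {f : ℝ → EReal} {n : ℕ}

lemma IsDensity.nonneg {ρ : Matrix (Fin n) (Fin n) ℂ} (h : IsDensity ρ) : 0 ≤ ρ :=
  Matrix.nonneg_iff_posSemidef.mpr h.1

lemma IsPOVM.sum_re_trace_mul {m : ℕ} {M : Fin m → Matrix (Fin n) (Fin n) ℂ} (hM : IsPOVM M)
    {ρ : Matrix (Fin n) (Fin n) ℂ} (hρ : ρ.trace = 1) : ∑ x, (ρ * M x).trace.re = 1 := by
  rw [← Complex.re_sum, ← Matrix.trace_sum, ← Matrix.mul_sum, hM.2, Matrix.mul_one, hρ,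
    Complex.one_re]

lemma isPOVM_pair {Q : Matrix (Fin n) (Fin n) ℂ} (hQ0 : 0 ≤ Q) (hQ1 : Q ≤ 1) :
    IsPOVM ![Q, 1 - Q] := by
  refine ⟨fun x => ?_, by simp [Fin.sum_univ_two]⟩
  fin_cases x
  · exact Matrix.nonneg_iff_posSemidef.mp hQ0
  · exact Matrix.nonneg_iff_posSemidef.mp (sub_nonneg.mpr hQ1)

lemma dfmin_lt_top_of_forall_gfun_le {ρ1 ρ2 : Matrix (Fin n) (Fin n) ℂ} (h1 : ρ1.trace = 1)
    (h2 : ρ2.trace = 1) {A B : ℝ}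
    (h : ∀ N : Matrix (Fin n) (Fin n) ℂ, 0 ≤ N → gfun f (ρ1 * N).trace.re (ρ2 * N).trace.re ≤
      ((A * (ρ2 * N).trace.re + B * (ρ1 * N).trace.re : ℝ) : EReal)) :
    Dfmin f ρ1 ρ2 < ⊤ := by
  refine lt_of_le_of_lt (b := ((A + B : ℝ) : EReal)) ?_ (EReal.coe_lt_top _)
  refine iSup_le fun m => iSup_le fun M => iSup_le fun hM => ?_
  calc ∑ x, gfun f (ρ1 * M x).trace.re (ρ2 * M x).trace.re
      ≤ ∑ x, ((A * (ρ2 * M x).trace.re + B * (ρ1 * M x).trace.re : ℝ) : EReal) :=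
        Finset.sum_le_sum fun x _ => h (M x) (Matrix.nonneg_iff_posSemidef.mpr (hM.1 x))
    _ = ((A + B : ℝ) : EReal) := by
        rw [← EReal.coe_finset_sum, Finset.sum_add_distrib, ← Finset.mul_sum, ← Finset.mul_sum,
          hM.sum_re_trace_mul h1, hM.sum_re_trace_mul h2, mul_one, mul_one]

lemma dfmin_eq_top_of_gfun_eq_top (hf : NiceF f) {ρ1 ρ2 Q : Matrix (Fin n) (Fin n) ℂ}
    (h1 : 0 ≤ ρ1) (h2 : 0 ≤ ρ2) (hQ0 : 0 ≤ Q) (hQ1 : Q ≤ 1)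
    (hQ : gfun f (ρ1 * Q).trace.re (ρ2 * Q).trace.re = ⊤) : Dfmin f ρ1 ρ2 = ⊤ := by
  have hP : 0 ≤ 1 - Q := sub_nonneg.mpr hQ1
  have hle : ∑ x, gfun f (ρ1 * ![Q, 1 - Q] x).trace.re (ρ2 * ![Q, 1 - Q] x).trace.re ≤
      Dfmin f ρ1 ρ2 :=
    le_iSup_of_le 2 (le_iSup_of_le _ (le_iSup_of_le (isPOVM_pair hQ0 hQ1) le_rfl))
  simp only [Fin.sum_univ_two, Matrix.cons_val_zero, Matrix.cons_val_one, hQ] at hle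
  rw [EReal.top_add_of_ne_bot (hf.gfun_ne_bot (Matrix.re_trace_mul_nonneg h1 hP)
      (Matrix.re_trace_mul_nonneg h2 hP))] at hle
  exact top_le_iff.mp hle

variable {ρ1 ρ2 : Matrix (Fin n) (Fin n) ℂ}

lemma dfmin_eq_top_of_not_mem_edom (hf : NiceF f) (h1 : IsDensity ρ1) (h2 : IsDensity ρ2)
    (h : ¬ suppM ρ2 ≤ suppM ρ1) (h0 : 0 ∉ edom f) : Dfmin f ρ1 ρ2 = ⊤ := by
  have hq := re_trace_mul_kerProj_pos h2.nonneg h1.1.1 h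
  refine dfmin_eq_top_of_gfun_eq_top (Q := ρ1.kerProj) hf h1.nonneg h2.nonneg
    Matrix.kerProj_nonneg Matrix.kerProj_le_one ?_
  rw [Matrix.mul_kerProj h1.1.1, Matrix.trace_zero, Complex.zero_re, gfun_zero_of_pos hq,
    eq_top_of_not_mem_edom h0, EReal.coe_mul_top_of_pos hq]

lemma dfmin_eq_top_of_not_hasLinearGrowth (hf : NiceF f) (h1 : IsDensity ρ1)
    (h2 : IsDensity ρ2) (h : ¬ suppM ρ1 ≤ suppM ρ2) (hL : ¬ HasLinearGrowth f) :
    Dfmin f ρ1 ρ2 = ⊤ := by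
  have hp := re_trace_mul_kerProj_pos h1.nonneg h2.1.1 h
  refine dfmin_eq_top_of_gfun_eq_top (Q := ρ2.kerProj) hf h1.nonneg h2.nonneg
    Matrix.kerProj_nonneg Matrix.kerProj_le_one ?_
  rw [Matrix.mul_kerProj h2.1.1, Matrix.trace_zero, Complex.zero_re,
    hf.gfun_of_pos_zero_eq_top hL hp]

lemma exists_lower_ratio (hf : NiceF f) (h1 : IsDensity ρ1) (h2 : IsDensity ρ2)
    (h : suppM ρ2 ≤ suppM ρ1 ∨ 0 ∈ edom f) :
    ∃ lo ∈ edom f, 0 ≤ lo ∧ lo ≤ 1 ∧ ∀ N : Matrix (Fin n) (Fin n) ℂ, 0 ≤ N →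
      lo * (ρ2 * N).trace.re ≤ (ρ1 * N).trace.re := by
  rcases h with h | h0
  · obtain ⟨c, hc, hle⟩ := exists_le_smul_of_suppM_le h2.nonneg h1.nonneg h
    refine ⟨min c⁻¹ 1, hf.mem_edom_of_pos (by positivity), by positivity, min_le_right _ _,
      fun N hN => ?_⟩
    have := Matrix.re_trace_mul_le_of_le_smul hle hN
    calc min c⁻¹ 1 * (ρ2 * N).trace.re ≤ c⁻¹ * (ρ2 * N).trace.re :=
          mul_le_mul_of_nonneg_right (min_le_left _ _) (Matrix.re_trace_mul_nonneg h2.nonneg hN)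
      _ ≤ (ρ1 * N).trace.re := by rw [inv_mul_le_iff₀ hc]; exact this
  · exact ⟨0, h0, le_rfl, zero_le_one, fun N hN => by
      simpa using Matrix.re_trace_mul_nonneg h1.nonneg hN⟩

theorem dfmin_lt_top_iff (hf : NiceF f) (h1 : IsDensity ρ1) (h2 : IsDensity ρ2) :
    Dfmin f ρ1 ρ2 < ⊤ ↔
      (suppM ρ2 ≤ suppM ρ1 ∨ 0 ∈ edom f) ∧ (suppM ρ1 ≤ suppM ρ2 ∨ HasLinearGrowth f) := by
  refine ⟨fun hfin => ⟨?_, ?_⟩, fun ⟨hlo, hhi⟩ => ?_⟩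
  · by_contra! h
    exact hfin.ne (dfmin_eq_top_of_not_mem_edom hf h1 h2 h.1 h.2)
  · by_contra! h
    exact hfin.ne (dfmin_eq_top_of_not_hasLinearGrowth hf h1 h2 h.1 h.2)
  obtain ⟨lo, hlo, hlo0, hlo1, hlop⟩ := exists_lower_ratio hf h1 h2 hlo
  have hp N (hN : 0 ≤ N) := Matrix.re_trace_mul_nonneg h1.nonneg hN
  have hq N (hN : 0 ≤ N) := Matrix.re_trace_mul_nonneg h2.nonneg hN
  rcases hhi with h | ⟨K, hK⟩
  · obtain ⟨c, hc, hle⟩ := exists_le_smul_of_suppM_le h1.nonneg h2.nonneg h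
    refine dfmin_lt_top_of_forall_gfun_le h1.2 h2.2
      (A := max (f lo).toReal (f c).toReal) (B := 0) fun N hN => ?_
    simpa using hf.gfun_le_of_ratio_mem_Icc hlo hlo0 hc (hp N hN) (hq N hN) (hlop N hN)
      (Matrix.re_trace_mul_le_of_le_smul hle hN)
  · exact dfmin_lt_top_of_forall_gfun_le h1.2 h2.2 fun N hN =>
      hf.gfun_le_of_linear_growth hK hlo hlo0 hlo1 (hp N hN) (hq N hN) (hlop N hN)

end Dfmin

/-- finiteness of `D_f^min` in terms of the supports of the two states. -/
theorem stmt_2 (f : ℝ → EReal) (hf : NiceF f) {n : ℕ}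
    (ρ1 ρ2 : Matrix (Fin n) (Fin n) ℂ) (h1 : IsDensity ρ1) (h2 : IsDensity ρ2) :
    (suppM ρ1 = suppM ρ2 → Dfmin f ρ1 ρ2 < ⊤) ∧
    (¬ suppM ρ1 ≤ suppM ρ2 → ¬ suppM ρ2 ≤ suppM ρ1 →
      (Dfmin f ρ1 ρ2 < ⊤ ↔ ConjBddBelow f ∧ ConjDomBddAbove f)) ∧
    (suppM ρ1 < suppM ρ2 → (Dfmin f ρ1 ρ2 < ⊤ ↔ ConjBddBelow f)) ∧
    (suppM ρ2 < suppM ρ1 → (Dfmin f ρ1 ρ2 < ⊤ ↔ ConjDomBddAbove f)) := by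
  rw [dfmin_lt_top_iff hf h1 h2, hf.conjBddBelow_iff, hf.conjDomBddAbove_iff,
    le_antisymm_iff, lt_iff_le_not_ge, lt_iff_le_not_ge]
  tauto
end
end

section
/- Suppose f is proper, lower semicontinuous, convex and canonical with dom f ⊇ (0,∞), f* is operator convex on dom f*, dom f* is unbounded from below, and f* is bounded from below (equivalently f*(−∞) := lim_{t→−∞} f*(t) > −∞). Then f* is operator monotone on dom f*: for all k ≥ 1 and all k×k Hermitian matrices A, B with spectra in dom f* and A ≤ B in the Loewner order, f*(A) ≤ f*(B), where f* is applied via the functional calculus on eigenvalues. -/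
open Filter Matrix
open scoped ComplexOrder
open scoped BigOperators

noncomputable section

attribute [local instance] Classical.propDecidable

open scoped MatrixOrder Topology

/-! Put `C m := B - 2 ^ m • (B - A)`: then `C 0 = A`, `C m ≤ B`, and `C m` is the midpoint of `B`
and `C (m + 1)`. Iterating midpoint operator convexity gives
`f*(A) ≤ (1 - 2⁻ᵐ) f*(B) + 2⁻ᵐ f*(C m)`. Every `C m` has spectrum below the top eigenvalue `M`
of `B`, hence inside `dom f*`, an interval unbounded below; so scalar monotonicity of `f*` gives
`f*(C m) ≤ f*(M)`, and letting `m → ∞` yields `f*(A) ≤ f*(B)`. -/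

lemma hermFC_eq_cfc {k : ℕ} (h : ℝ → ℝ) {A : Matrix (Fin k) (Fin k) ℂ} (hA : A.IsHermitian) :
    hermFC h hA = cfc h A := by
  rw [hA.cfc_eq, IsHermitian.cfc, Unitary.conjStarAlgAut_apply]
  rfl

lemma specIn_iff {k : ℕ} {A : Matrix (Fin k) (Fin k) ℂ} (hA : A.IsHermitian) (S : Set ℝ) :
    specIn hA S ↔ spectrum ℝ A ⊆ S := by
  rw [hA.spectrum_real_eq_range_eigenvalues, Set.range_subset_iff, specIn]

lemma econj_le_max (f : ℝ → EReal) {a b t : ℝ} (hat : a ≤ t) (htb : t ≤ b) :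
    econj f t ≤ max (econj f a) (econj f b) := by
  refine iSup_le fun l => ?_
  have hle : ∀ s, ((s * l : ℝ) : EReal) - f l ≤ econj f s := fun s =>
    le_iSup (fun l => ((s * l : ℝ) : EReal) - f l) l
  rcases le_total 0 l with hl | hl
  · refine le_max_of_le_right ((EReal.sub_le_sub ?_ le_rfl).trans (hle b))
    exact EReal.coe_le_coe_iff.2 (mul_le_mul_of_nonneg_right htb hl)
  · refine le_max_of_le_left ((EReal.sub_le_sub ?_ le_rfl).trans (hle a))
    exact EReal.coe_le_coe_iff.2 (mul_le_mul_of_nonpos_right hat hl)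

lemma ordConnected_edom_econj (f : ℝ → EReal) : (edom (econj f)).OrdConnected :=
  ⟨fun _ ha _ hb _ ht => (econj_le_max f ht.1 ht.2).trans_lt (max_lt ha hb)⟩

lemma StrictMonoOn.ne_bot_of_not_bddBelow {α β : Type*} [LinearOrder α] [Preorder β]
    [OrderBot β] {g : α → β} {S : Set α} (hg : StrictMonoOn g S) (hS : ¬ BddBelow S) {s : α}
    (hs : s ∈ S) :
    g s ≠ ⊥ := by
  obtain ⟨r, hr, hrs⟩ := not_bddBelow_iff.mp hS s
  exact ne_bot_of_gt (hg hr hs hrs)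

lemma monotoneOn_econjR {f : ℝ → EReal} (hcanon : StrictMonoOn (econj f) (edom (econj f)))
    (hunbdd : ¬ BddBelow (edom (econj f))) : MonotoneOn (econjR f) (edom (econj f)) :=
  fun _ hs _ ht hst => EReal.toReal_le_toReal (hcanon.monotoneOn hs ht hst)
    (hcanon.ne_bot_of_not_bddBelow hunbdd hs) ht.ne

lemma Set.OrdConnected.Iic_subset_of_not_bddBelow {α : Type*} [LinearOrder α] {S : Set α}
    (hS : S.OrdConnected) (hunbdd : ¬ BddBelow S) {M : α} (hM : M ∈ S) : Set.Iic M ⊆ S := fun x hx => by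
  obtain ⟨y, hy, hyx⟩ := not_bddBelow_iff.mp hunbdd x
  exact hS.out hy hM ⟨hyx.le, hx⟩

lemma apply_zero_le_of_le_midpoint {V : Type*} [AddCommGroup V] [PartialOrder V]
    [IsOrderedAddMonoid V] [Module ℝ V] [PosSMulMono ℝ V] {x : V} {F : ℕ → V}
    (hF : ∀ m, F m ≤ (1 / 2 : ℝ) • (x + F (m + 1))) :
    ∀ m : ℕ, F 0 ≤ (1 - (1 / 2 : ℝ) ^ m) • x + (1 / 2 : ℝ) ^ m • F m
  | 0 => by simp
  | m + 1 => calc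
      F 0 ≤ (1 - (1 / 2 : ℝ) ^ m) • x + (1 / 2 : ℝ) ^ m • F m := apply_zero_le_of_le_midpoint hF m
      _ ≤ (1 - (1 / 2 : ℝ) ^ m) • x + (1 / 2 : ℝ) ^ m • ((1 / 2 : ℝ) • (x + F (m + 1))) := by
        gcongr
        exact hF m
      _ = (1 - (1 / 2 : ℝ) ^ (m + 1)) • x + (1 / 2 : ℝ) ^ (m + 1) • F (m + 1) := by
        rw [pow_succ]; module

lemma Matrix.nonneg_of_tendsto_add_smul_nonneg {n 𝕜 : Type*} [Fintype n] [RCLike 𝕜]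
    {D E : Matrix n n 𝕜} (hD : D.IsHermitian) {ε : ℕ → ℝ} (hε : Tendsto ε atTop (𝓝 0))
    (h : ∀ m, 0 ≤ D + ε m • E) : 0 ≤ D := by
  refine (PosSemidef.of_dotProduct_mulVec_nonneg hD fun x => ?_).nonneg
  have hlim : Tendsto (fun m => D + ε m • E) atTop (𝓝 D) := by
    simpa using tendsto_const_nhds.add (hε.smul_const E)
  have hq : Continuous fun X : Matrix n n 𝕜 => star x ⬝ᵥ X *ᵥ x := by fun_prop
  exact ge_of_tendsto' ((hq.tendsto D).comp hlim) fun m =>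
    (h m).posSemidef.dotProduct_mulVec_nonneg x

theorem cfc_le_cfc_of_midpoint_convex {n 𝕜 : Type*} [Fintype n] [DecidableEq n] [Nonempty n]
    [RCLike 𝕜] {S : Set ℝ} {h : ℝ → ℝ} (hS : S.OrdConnected) (hunbdd : ¬ BddBelow S)
    (hmono : MonotoneOn h S)
    (hconv : ∀ X Y : Matrix n n 𝕜, IsSelfAdjoint X → IsSelfAdjoint Y →
      spectrum ℝ X ⊆ S → spectrum ℝ Y ⊆ S →
      cfc h ((1 / 2 : ℝ) • (X + Y)) ≤ (1 / 2 : ℝ) • (cfc h X + cfc h Y))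
    {A B : Matrix n n 𝕜} (hA : IsSelfAdjoint A) (hB : IsSelfAdjoint B)
    (hBS : spectrum ℝ B ⊆ S) (hAB : A ≤ B) : cfc h A ≤ cfc h B := by
  obtain ⟨M, hMB, hM⟩ := B.finite_real_spectrum.isCompact.exists_isGreatest
    (ContinuousFunctionalCalculus.spectrum_nonempty B hB)
  set C : ℕ → Matrix n n 𝕜 := fun m => B - (2 : ℝ) ^ m • (B - A) with hC
  have hC_sa : ∀ m, IsSelfAdjoint (C m) := fun m => hB.sub (.smul (.all _) (hB.sub hA))
  have hC_le : ∀ m, C m ≤ B := fun m =>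
    sub_le_self _ (smul_nonneg (by positivity) (sub_nonneg.2 hAB))
  have hC_spec : ∀ m, spectrum ℝ (C m) ⊆ Set.Iic M := fun m =>
    (le_algebraMap_iff_spectrum_le (hC_sa m)).1
      ((hC_le m).trans (le_algebraMap_of_spectrum_le hM))
  have hCS : ∀ m, spectrum ℝ (C m) ⊆ S := fun m =>
    (hC_spec m).trans (hS.Iic_subset_of_not_bddBelow hunbdd (hBS hMB))
  have hmid : ∀ m, cfc h (C m) ≤ (1 / 2 : ℝ) • (cfc h B + cfc h (C (m + 1))) := fun m => by
    have e : (1 / 2 : ℝ) • (B + C (m + 1)) = C m := by simp only [hC, pow_succ]; module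
    simpa only [e] using hconv B (C (m + 1)) hB (hC_sa _) hBS (hCS _)
  have hC_bound : ∀ m, cfc h (C m) ≤ algebraMap ℝ _ (h M) := fun m =>
    cfc_le_algebraMap h _ _ (fun x hx => hmono (hCS m hx) (hBS hMB) (hC_spec m hx))
      ((C m).finite_real_spectrum.continuousOn h)
  have key : ∀ m : ℕ, cfc h A ≤
      (1 - (1 / 2 : ℝ) ^ m) • cfc h B + (1 / 2 : ℝ) ^ m • algebraMap ℝ _ (h M) := fun m =>
    calc cfc h A = cfc h (C 0) := by simp [hC]
      _ ≤ (1 - (1 / 2 : ℝ) ^ m) • cfc h B + (1 / 2 : ℝ) ^ m • cfc h (C m) :=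
        apply_zero_le_of_le_midpoint hmid m
      _ ≤ _ := by gcongr; exact hC_bound m
  refine sub_nonneg.1 (Matrix.nonneg_of_tendsto_add_smul_nonneg
    (E := algebraMap ℝ _ (h M) - cfc h B) ((cfc_predicate h B).sub (cfc_predicate h A))
    (tendsto_pow_atTop_nhds_zero_of_lt_one (r := 1 / 2) (by norm_num) (by norm_num))
    fun m => ?_)
  convert sub_nonneg.2 (key m) using 1
  module

theorem stmt_9_general (f : ℝ → EReal)
    (hcanon : StrictMonoOn (econj f) (edom (econj f)))
    (hI : CondI f)
    (hunbdd : ¬ BddBelow (edom (econj f))) :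
    ∀ (k : ℕ), 1 ≤ k → ∀ (A B : Matrix (Fin k) (Fin k) ℂ)
      (hA : A.IsHermitian) (hB : B.IsHermitian),
      specIn hA (edom (econj f)) → specIn hB (edom (econj f)) →
      Loewner A B →
      Loewner (hermFC (econjR f) hA) (hermFC (econjR f) hB) := by
  intro k hk A B hA hB _ hBS hAB
  have : Nonempty (Fin k) := ⟨⟨0, hk⟩⟩
  have half_smul : ∀ Z : Matrix (Fin k) (Fin k) ℂ, (1 / 2 : ℂ) • Z = (1 / 2 : ℝ) • Z :=
    fun Z => by rw [← Complex.coe_smul]; norm_num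
  rw [Loewner, ← Matrix.le_iff, hermFC_eq_cfc, hermFC_eq_cfc]
  refine cfc_le_cfc_of_midpoint_convex (ordConnected_edom_econj f) hunbdd
    (monotoneOn_econjR hcanon hunbdd)
    (fun X Y (hX : X.IsHermitian) (hY : Y.IsHermitian) hXS hYS => ?_)
    hA hB ((specIn_iff hB _).1 hBS) hAB
  have hM : ((1 / 2 : ℂ) • (X + Y)).IsHermitian := by
    rw [half_smul]; exact (hX.add hY).smul (.all (1 / 2 : ℝ))
  rw [Matrix.le_iff]
  simpa only [Loewner, hermFC_eq_cfc, half_smul] using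
    hI k hk X Y hX hY hM ((specIn_iff hX _).2 hXS) ((specIn_iff hY _).2 hYS)

/-- if `f` is proper lsc convex canonical with `dom f ⊇ (0,∞)`, `f*` is
operator convex, `dom f*` is unbounded from below and `f*` is bounded from below,
then `f*` is operator monotone on `dom f*`. -/
theorem stmt_9 (f : ℝ → EReal) (hf : NiceF f)
    (hcanon : StrictMonoOn (econj f) (edom (econj f)))
    (hI : CondI f)
    (hunbdd : ¬ BddBelow (edom (econj f)))
    (hbddbelow : ∃ c : ℝ, ∀ t : ℝ, ((c : ℝ) : EReal) ≤ econj f t) :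
    ∀ (k : ℕ), 1 ≤ k → ∀ (A B : Matrix (Fin k) (Fin k) ℂ)
      (hA : A.IsHermitian) (hB : B.IsHermitian),
      specIn hA (edom (econj f)) → specIn hB (edom (econj f)) →
      Loewner A B →
      Loewner (hermFC (econjR f) hA) (hermFC (econjR f) hB) :=
  stmt_9_general f hcanon hI hunbdd
end
end

section
/- Let f_{1/2} : ℝ → ℝ ∪ {+∞} be defined by f_{1/2}(λ) := −√λ for λ ≥ 0 and f_{1/2}(λ) := +∞ for λ < 0. Then for positive definite density matrices ρ1 and ρ2 of the same finite size, D_{f_{1/2}}^min(ρ1‖ρ2) = −tr √( ρ2^{1/2} · ρ1 · ρ2^{1/2} ), i.e. the maximized measured f_{1/2}-divergence equals minus the fidelity between ρ1 and ρ2. -/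
open Filter Matrix
open scoped ComplexOrder
open scoped BigOperators

noncomputable section

attribute [local instance] Classical.propDecidable

/-- `f_{1/2}(λ) = −√λ` for `λ ≥ 0`, `+∞` for `λ < 0`. -/
def fhalf : ℝ → EReal := fun l => if 0 ≤ l then ((-Real.sqrt l : ℝ) : EReal) else ⊤

/-!
For `p, q ≥ 0` one has `g(p, q) = -√(p q)`, so `D_{f_{1/2}}^min(ρ1‖ρ2)` is minus the infimum over
POVMs of `∑ₓ √(tr(ρ1 Mₓ) tr(ρ2 Mₓ))`. Put `B = F S⁻¹`; then `Bᴴ B = ρ1`, `Sᴴ S = ρ2` and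
`tr (B Sᴴ) = tr F`. Splitting `tr (B Sᴴ) = ∑ₓ tr (B Mₓ Sᴴ)` and applying Cauchy–Schwarz to the
semi-inner product `(X, Y) ↦ tr (Y Mₓ Xᴴ)` bounds `tr F` by that sum for every POVM. Equality is
attained by measuring in an eigenbasis of `O = S⁻¹ F S⁻¹`, which satisfies `O ρ2 O = ρ1` and
`tr (O ρ2) = tr F`: on the `i`-th outcome `tr(ρ1 Mᵢ) = dᵢ² tr(ρ2 Mᵢ)` for the eigenvalue `dᵢ ≥ 0`.
-/

namespace Matrix

variable {n 𝕜 : Type*} [Fintype n] [RCLike 𝕜]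

lemma PosSemidef.re_trace_mul_nonneg {A B : Matrix n n 𝕜} (hA : A.PosSemidef)
    (hB : B.PosSemidef) : 0 ≤ RCLike.re (A * B).trace := by
  classical
  open scoped MatrixOrder in
  obtain ⟨C, rfl⟩ := CStarAlgebra.nonneg_iff_eq_star_mul_self.mp hB.nonneg
  rw [star_eq_conjTranspose, ← Matrix.mul_assoc, trace_mul_cycle]
  exact (RCLike.nonneg_iff.mp (hA.mul_mul_conjTranspose_same C).trace_nonneg).1

/-- Cauchy–Schwarz for the semi-inner product `⟪A, B⟫ = tr (B M Aᴴ)` induced by `M`. -/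
lemma PosSemidef.norm_trace_mul_mul_conjTranspose_le {M : Matrix n n 𝕜}
    (hM : M.PosSemidef) (A B : Matrix n n 𝕜) :
    ‖(B * M * Aᴴ).trace‖ ≤
      √(RCLike.re (A * M * Aᴴ).trace) * √(RCLike.re (B * M * Bᴴ).trace) := by
  let := M.toMatrixSeminormedAddCommGroup hM
  let := M.toMatrixInnerProductSpace hM
  have h := norm_inner_le_norm (𝕜 := 𝕜) A B
  rwa [norm_eq_sqrt_re_inner (𝕜 := 𝕜) A, norm_eq_sqrt_re_inner (𝕜 := 𝕜) B] at h

variable [DecidableEq n]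

lemma diagonal_mul_single_self {α : Type*} [Semiring α] (d : n → α) (i : n) :
    diagonal d * single i i (1 : α) = d i • single i i 1 := by
  ext j k; simp [diagonal_mul, single_apply]; grind

lemma single_self_mul_diagonal {α : Type*} [Semiring α] (d : n → α) (i : n) :
    single i i 1 * diagonal d = d i • single i i 1 := by
  ext j k; simp [mul_diagonal, single_apply]; grind

lemma re_trace_mul_conjTranspose_le_sum_sqrt {ι : Type*} [Fintype ι] (A B : Matrix n n 𝕜)
    {M : ι → Matrix n n 𝕜} (hM : ∀ x, (M x).PosSemidef) (hM1 : ∑ x, M x = 1) :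
    RCLike.re (B * Aᴴ).trace ≤
      ∑ x, √(RCLike.re (Bᴴ * B * M x).trace * RCLike.re (Aᴴ * A * M x).trace) :=
  calc RCLike.re (B * Aᴴ).trace = ∑ x, RCLike.re (B * M x * Aᴴ).trace := by
        rw [← map_sum, ← trace_sum, ← Finset.sum_mul, ← Finset.mul_sum, hM1, Matrix.mul_one]
    _ ≤ ∑ x, ‖(B * M x * Aᴴ).trace‖ := Finset.sum_le_sum fun x _ => RCLike.re_le_norm _
    _ ≤ ∑ x, √(RCLike.re (A * M x * Aᴴ).trace) * √(RCLike.re (B * M x * Bᴴ).trace) :=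
        Finset.sum_le_sum fun x _ => (hM x).norm_trace_mul_mul_conjTranspose_le A B
    _ = _ := by
        refine Finset.sum_congr rfl fun x _ => ?_
        rw [trace_mul_cycle A, trace_mul_cycle B, mul_comm, Real.sqrt_mul
          ((posSemidef_conjTranspose_mul_self B).re_trace_mul_nonneg (hM x))]

namespace IsHermitian

variable {A : Matrix n n 𝕜} (hA : A.IsHermitian)

def eigenvectorProj (i : n) : Matrix n n 𝕜 :=
  Unitary.conjStarAlgAut 𝕜 _ hA.eigenvectorUnitary (single i i 1)

lemma posSemidef_eigenvectorProj (i : n) : (hA.eigenvectorProj i).PosSemidef := by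
  rw [eigenvectorProj, Unitary.conjStarAlgAut_apply, star_eq_conjTranspose,
    ← diagonal_single]
  refine (PosSemidef.diagonal fun j => ?_).mul_mul_conjTranspose_same _
  by_cases h : j = i <;> simp [h]

lemma sum_eigenvectorProj : ∑ i, hA.eigenvectorProj i = 1 := by
  simp only [eigenvectorProj]
  rw [← map_sum, sum_single_one, map_one]

lemma mul_eigenvectorProj (i : n) :
    A * hA.eigenvectorProj i = (hA.eigenvalues i : 𝕜) • hA.eigenvectorProj i := by
  conv_lhs => arg 1; rw [hA.spectral_theorem]
  rw [eigenvectorProj, ← map_mul, diagonal_mul_single_self, map_smul]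
  rfl

lemma eigenvectorProj_mul (i : n) :
    hA.eigenvectorProj i * A = (hA.eigenvalues i : 𝕜) • hA.eigenvectorProj i := by
  conv_lhs => arg 2; rw [hA.spectral_theorem]
  rw [eigenvectorProj, ← map_mul, single_self_mul_diagonal, map_smul]
  rfl

end IsHermitian

lemma sum_sqrt_re_trace_mul_of_mul_eq_smul {ι : Type*} [Fintype ι] {O ρ : Matrix n n 𝕜}
    {P : ι → Matrix n n 𝕜} {d : ι → ℝ} (hρ : ρ.PosSemidef) (hP : ∀ i, (P i).PosSemidef)
    (hP1 : ∑ i, P i = 1) (hd : ∀ i, 0 ≤ d i) (hOP : ∀ i, O * P i = (d i : 𝕜) • P i)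
    (hPO : ∀ i, P i * O = (d i : 𝕜) • P i) :
    ∑ i, √(RCLike.re (O * ρ * O * P i).trace * RCLike.re (ρ * P i).trace) =
      RCLike.re (O * ρ).trace := by
  have hρPO : ∀ i, RCLike.re (ρ * P i * O).trace = d i * RCLike.re (ρ * P i).trace := fun i => by
    rw [Matrix.mul_assoc, hPO, mul_smul_comm, trace_smul, smul_eq_mul, RCLike.re_ofReal_mul]
  have hOρOP : ∀ i, RCLike.re (O * ρ * O * P i).trace = d i ^ 2 * RCLike.re (ρ * P i).trace :=
    fun i => by
      rw [Matrix.mul_assoc, hOP, mul_smul_comm, trace_smul, smul_eq_mul, RCLike.re_ofReal_mul,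
        ← trace_mul_cycle ρ, hρPO, sq, mul_assoc]
  calc ∑ i, √(RCLike.re (O * ρ * O * P i).trace * RCLike.re (ρ * P i).trace)
      = ∑ i, RCLike.re (ρ * P i * O).trace := Finset.sum_congr rfl fun i _ => by
        rw [hOρOP, hρPO, ← Real.sqrt_sq (mul_nonneg (hd i) (hρ.re_trace_mul_nonneg (hP i)))]
        congr 1
        ring
    _ = RCLike.re (O * ρ).trace := by
        rw [← map_sum, ← trace_sum, ← Finset.sum_mul, ← Finset.mul_sum, hP1, Matrix.mul_one,
          trace_mul_comm]

end Matrix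

lemma mul_fhalf_div {p u : ℝ} (hp : 0 ≤ p) (hu : 0 < u) :
    (u : EReal) * fhalf (p / u) = ((-√(p * u) : ℝ) : EReal) := by
  have h : p * u = u * u * (p / u) := by field_simp
  rw [fhalf, if_pos (div_nonneg hp hu.le), ← EReal.coe_mul, mul_neg, h,
    Real.sqrt_mul (mul_self_nonneg u), Real.sqrt_mul_self hu.le]

lemma gfun_fhalf {p q : ℝ} (hp : 0 ≤ p) (hq : 0 ≤ q) :
    gfun fhalf p q = ((-√(p * q) : ℝ) : EReal) := by
  have hdom : p ∈ edom fhalf := by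
    simp only [edom, Set.mem_ofPred_eq, fhalf, if_pos hp, EReal.coe_lt_top]
  rcases hq.eq_or_lt with rfl | hq
  · rcases hp.eq_or_lt with rfl | hp₀
    · simp [gfun]
    rw [gfun, if_neg (fun h => hp₀.ne' h.1), if_neg (fun h => lt_irrefl _ h.2),
      if_pos ⟨hdom, rfl⟩]
    refine Tendsto.limUnder_eq ?_
    have hcont : Continuous fun u : ℝ => ((-√(p * u) : ℝ) : EReal) :=
      continuous_coe_real_ereal.comp (by fun_prop)
    refine (hcont.tendsto' 0 _ (by simp)).mono_left nhdsWithin_le_nhds |>.congr' ?_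
    exact eventually_nhdsWithin_of_forall fun u hu => (mul_fhalf_div hp hu).symm
  · rw [gfun, if_neg (fun h => hq.ne' h.2), if_pos ⟨hdom, hq⟩, mul_fhalf_div hp hq]

lemma sum_gfun_fhalf {ι : Type*} [Fintype ι] {p q : ι → ℝ} (hp : ∀ i, 0 ≤ p i)
    (hq : ∀ i, 0 ≤ q i) :
    ∑ i, gfun fhalf (p i) (q i) = ((-∑ i, √(p i * q i) : ℝ) : EReal) := by
  simp only [gfun_fhalf (hp _) (hq _), ← Finset.sum_neg_distrib]
  exact (map_sum (⟨⟨Real.toEReal, EReal.coe_zero⟩, EReal.coe_add⟩ : ℝ →+ EReal) _ _).symm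

lemma Dfmin_fhalf_le {n : ℕ} (A B : Matrix (Fin n) (Fin n) ℂ) :
    Dfmin fhalf (Bᴴ * B) (Aᴴ * A) ≤ ((-(B * Aᴴ).trace.re : ℝ) : EReal) := by
  refine iSup_le fun m => iSup_le fun M => iSup_le fun hM => ?_
  have hp : ∀ x, 0 ≤ (Bᴴ * B * M x).trace.re := fun x =>
    (posSemidef_conjTranspose_mul_self B).re_trace_mul_nonneg (hM.1 x)
  have hq : ∀ x, 0 ≤ (Aᴴ * A * M x).trace.re := fun x =>
    (posSemidef_conjTranspose_mul_self A).re_trace_mul_nonneg (hM.1 x)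
  rw [sum_gfun_fhalf hp hq, EReal.coe_le_coe_iff, neg_le_neg_iff]
  exact re_trace_mul_conjTranspose_le_sum_sqrt A B hM.1 hM.2

lemma le_Dfmin_fhalf {n : ℕ} {O ρ : Matrix (Fin n) (Fin n) ℂ} (hO : O.PosSemidef)
    (hρ : ρ.PosSemidef) : ((-(O * ρ).trace.re : ℝ) : EReal) ≤ Dfmin fhalf (O * ρ * O) ρ := by
  have hM : IsPOVM hO.1.eigenvectorProj :=
    ⟨hO.1.posSemidef_eigenvectorProj, hO.1.sum_eigenvectorProj⟩
  have hOρO : (O * ρ * O).PosSemidef := by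
    simpa only [hO.1.eq] using hρ.mul_mul_conjTranspose_same O
  have hp : ∀ x, 0 ≤ (O * ρ * O * hO.1.eigenvectorProj x).trace.re := fun x =>
    hOρO.re_trace_mul_nonneg (hM.1 x)
  have hq : ∀ x, 0 ≤ (ρ * hO.1.eigenvectorProj x).trace.re := fun x =>
    hρ.re_trace_mul_nonneg (hM.1 x)
  refine le_iSup_of_le n (le_iSup_of_le _ (le_iSup_of_le hM (le_of_eq ?_)))
  rw [sum_gfun_fhalf hp hq]
  exact congrArg (fun t : ℝ => ((-t : ℝ) : EReal)) (sum_sqrt_re_trace_mul_of_mul_eq_smul hρ hM.1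
    hM.2 hO.eigenvalues_nonneg hO.1.mul_eigenvectorProj hO.1.eigenvectorProj_mul).symm

theorem stmt_14_general {n : ℕ} (ρ1 ρ2 : Matrix (Fin n) (Fin n) ℂ)
    (h2 : ρ2.PosDef)
    (S : Matrix (Fin n) (Fin n) ℂ) (hS : S.PosSemidef) (hS2 : S * S = ρ2)
    (F : Matrix (Fin n) (Fin n) ℂ) (hF : F.PosSemidef) (hF2 : F * F = S * ρ1 * S) :
    Dfmin fhalf ρ1 ρ2 = ((-(F.trace.re) : ℝ) : EReal) := by
  have hSdet : IsUnit S.det := isUnit_of_mul_isUnit_left (y := S.det) <| by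
    rw [← det_mul, hS2, ← isUnit_iff_isUnit_det]; exact h2.isUnit
  have hSH : Sᴴ = S := hS.isHermitian.eq
  have hSinvH : S⁻¹ᴴ = S⁻¹ := by rw [conjTranspose_nonsing_inv, hSH]
  have hρ1 : S⁻¹ * (F * (F * S⁻¹)) = ρ1 := by
    rw [← Matrix.mul_assoc F, hF2, Matrix.mul_assoc, Matrix.mul_assoc, mul_nonsing_inv _ hSdet,
      Matrix.mul_one, ← Matrix.mul_assoc, nonsing_inv_mul _ hSdet, Matrix.one_mul]
  have hOρ2 : S⁻¹ * F * S⁻¹ * ρ2 = S⁻¹ * F * S := by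
    rw [← hS2, ← Matrix.mul_assoc, Matrix.mul_assoc _ S⁻¹, nonsing_inv_mul _ hSdet, Matrix.mul_one]
  have hO : (S⁻¹ * F * S⁻¹).PosSemidef := by
    simpa only [hSinvH] using hF.conjTranspose_mul_mul_same S⁻¹
  apply le_antisymm
  · calc Dfmin fhalf ρ1 ρ2 = Dfmin fhalf ((F * S⁻¹)ᴴ * (F * S⁻¹)) (Sᴴ * S) := by
          rw [conjTranspose_mul, hSinvH, hF.isHermitian.eq, hSH, hS2, Matrix.mul_assoc, hρ1]
      _ ≤ ((-(F * S⁻¹ * Sᴴ).trace.re : ℝ) : EReal) := Dfmin_fhalf_le S (F * S⁻¹)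
      _ = ((-F.trace.re : ℝ) : EReal) := by
          rw [hSH, Matrix.mul_assoc, nonsing_inv_mul _ hSdet, Matrix.mul_one]
  · calc ((-F.trace.re : ℝ) : EReal) = ((-(S⁻¹ * F * S⁻¹ * ρ2).trace.re : ℝ) : EReal) := by
          rw [hOρ2, trace_mul_cycle, mul_nonsing_inv _ hSdet, Matrix.one_mul]
      _ ≤ Dfmin fhalf (S⁻¹ * F * S⁻¹ * ρ2 * (S⁻¹ * F * S⁻¹)) ρ2 :=
          le_Dfmin_fhalf hO h2.posSemidef
      _ = Dfmin fhalf ρ1 ρ2 := by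
          rw [hOρ2]
          simp only [Matrix.mul_assoc, mul_nonsing_inv_cancel_left _ _ hSdet, hρ1]

/-- the maximized measured `f_{1/2}`-divergence equals minus the
fidelity: `D_{f_{1/2}}^min(ρ1‖ρ2) = −tr √(√ρ2 ρ1 √ρ2)` (here `S = √ρ2` and
`F = √(S ρ1 S)` are the positive semidefinite square roots). -/
theorem stmt_14 {n : ℕ} (ρ1 ρ2 : Matrix (Fin n) (Fin n) ℂ)
    (h1 : ρ1.PosDef) (h1t : ρ1.trace = 1) (h2 : ρ2.PosDef) (h2t : ρ2.trace = 1)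
    (S : Matrix (Fin n) (Fin n) ℂ) (hS : S.PosSemidef) (hS2 : S * S = ρ2)
    (F : Matrix (Fin n) (Fin n) ℂ) (hF : F.PosSemidef) (hF2 : F * F = S * ρ1 * S) :
    Dfmin fhalf ρ1 ρ2 = ((-(F.trace.re) : ℝ) : EReal) :=
  stmt_14_general ρ1 ρ2 h2 S hS hS2 F hF hF2
end
end
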